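/- arXiv:1803.02006 — 2 statements merged into one kernel-verified Lean document; each statement's English description precedes it below -/
import Mathlib

section
/- Let G be a finite group, let φ_i : 𝒢̃_i → 𝒢_i (i = 1, 2) be two G-covers of graphs, and let τ : G → G be an automorphism. Let 𝒲_{𝒢_i} be the set of simple closed walks on 𝒢_i. If there exists no bijection Θ : 𝒲_{𝒢₁} → 𝒲_{𝒢₂} such that τ(NV_{φ₁}(γ)) = NV_{φ₂}(Θ(γ)) for every γ ∈ 𝒲_{𝒢₁}, then there exists no isomorphism of graphs θ : 𝒢₁ → 𝒢₂ such that 𝒢̃₁ and 𝒢̃₂ are (θ, τ)-equivalent. -/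
/-- A finite graph: each edge `e` has an initial vertex `init e` and a terminal
vertex `term e` (forming its plus direction `e⁺`; the minus direction is reversed). -/
structure FinDirGraph where
  V : Type
  E : Type
  finV : Finite V
  finE : Finite E
  init : E → V
  term : E → V

namespace FinDirGraph

/-- Initial vertex of a directed edge; `true` is the plus direction. -/
def dsrc (Γ : FinDirGraph) (e : Γ.E) (s : Bool) : Γ.V := if s then Γ.init e else Γ.term e

/-- Terminal vertex of a directed edge. -/
def ddst (Γ : FinDirGraph) (e : Γ.E) (s : Bool) : Γ.V := if s then Γ.term e else Γ.init e

/-- `Γ.WalkFrom v ℓ w` : the list of directed edges `ℓ` is a walk from `v` to `w`. -/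
def WalkFrom (Γ : FinDirGraph) : Γ.V → List (Γ.E × Bool) → Γ.V → Prop
  | v, [], w => v = w
  | v, p :: rest, w => Γ.dsrc p.1 p.2 = v ∧ Γ.WalkFrom (Γ.ddst p.1 p.2) rest w

/-- The list of vertices `v₀, …, v_n` visited by a walk with edge list `ℓ` starting at `v`. -/
def vertList (Γ : FinDirGraph) : Γ.V → List (Γ.E × Bool) → List Γ.V
  | v, [] => [v]
  | v, p :: rest => v :: Γ.vertList (Γ.ddst p.1 p.2) rest

end FinDirGraph

/-- A map of graphs: the endpoint set of the image of an edge is the image of its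
endpoint set. -/
structure GraphMap (Γ₁ Γ₂ : FinDirGraph) where
  mapV : Γ₁.V → Γ₂.V
  mapE : Γ₁.E → Γ₂.E
  endpoints : ∀ e : Γ₁.E,
    ({Γ₂.init (mapE e), Γ₂.term (mapE e)} : Set Γ₂.V) = mapV '' {Γ₁.init e, Γ₁.term e}

/-- An isomorphism of graphs. -/
structure GraphIso (Γ₁ Γ₂ : FinDirGraph) extends GraphMap Γ₁ Γ₂ where
  bijV : Function.Bijective mapV
  bijE : Function.Bijective mapE

/-- A `G`-cover of graphs `φ : T → B`: `G` acts on `T` (compatibly with endpoints,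
preserving the chosen directions), `φ` is `G`-invariant and direction-preserving,
identifies `T/G` with `B` (it is surjective and `G` is transitive on all fibers),
and `G` acts freely on the edges of `T` as soon as `B` has an edge. -/
structure GCover (G : Type) [Group G] (T B : FinDirGraph) where
  mapV : T.V → B.V
  mapE : T.E → B.E
  actV : G → T.V → T.V
  actE : G → T.E → T.E
  actV_one : ∀ v, actV 1 v = v
  actV_mul : ∀ g h v, actV (g * h) v = actV g (actV h v)
  actE_one : ∀ e, actE 1 e = e
  actE_mul : ∀ g h e, actE (g * h) e = actE g (actE h e)
  act_init : ∀ g e, T.init (actE g e) = actV g (T.init e)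
  act_term : ∀ g e, T.term (actE g e) = actV g (T.term e)
  map_init : ∀ e, B.init (mapE e) = mapV (T.init e)
  map_term : ∀ e, B.term (mapE e) = mapV (T.term e)
  map_actV : ∀ g v, mapV (actV g v) = mapV v
  map_actE : ∀ g e, mapE (actE g e) = mapE e
  surjV : Function.Surjective mapV
  surjE : Function.Surjective mapE
  transV : ∀ v w, mapV v = mapV w → ∃ g, actV g v = w
  transE : ∀ e f, mapE e = mapE f → ∃ g, actE g e = f
  freeE : Nonempty B.E → ∀ g e, actE g e = e → g = 1

namespace GCover

variable {G : Type} [Group G] {T B : FinDirGraph}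

/-- The net voltage set `NV_φ(γ, w₀)` of a closed walk with edge list `ℓ` at a
base vertex `w₀` of the cover: the set of `g ∈ G` such that some lift of the walk
starting at `w₀` ends at `g·w₀`. -/
def NVset (φ : GCover G T B) (ℓ : List (B.E × Bool)) (w₀ : T.V) : Set G :=
  {g | ∃ ℓ' : List (T.E × Bool),
    ℓ'.map (fun p => (φ.mapE p.1, p.2)) = ℓ ∧ T.WalkFrom w₀ ℓ' (φ.actV g w₀)}

/-- The net voltage class `NV_φ(γ)` of a closed walk `γ = (v₀, ℓ)`: the conjugacy
class in `G` of `NV_φ(γ, w₀)` for (any) `w₀` in the fiber over `v₀`. -/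
def NVclass (φ : GCover G T B) (v₀ : B.V) (ℓ : List (B.E × Bool)) : Set (Set G) :=
  {S | ∃ w₀ : T.V, φ.mapV w₀ = v₀ ∧
    ∃ g : G, S = (fun h => g * h * g⁻¹) '' φ.NVset ℓ w₀}

end GCover

/-- A `(θ, τ)`-equivalence between two `G`-covers. -/
structure GCoverEquiv {G : Type} [Group G] {T₁ B₁ T₂ B₂ : FinDirGraph}
    (φ₁ : GCover G T₁ B₁) (φ₂ : GCover G T₂ B₂)
    (θ : GraphIso B₁ B₂) (τ : G ≃* G) where
  iso : GraphIso T₁ T₂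
  commV : ∀ v, φ₂.mapV (iso.mapV v) = θ.mapV (φ₁.mapV v)
  commE : ∀ e, φ₂.mapE (iso.mapE e) = θ.mapE (φ₁.mapE e)
  equivV : ∀ (g : G) v, iso.mapV (φ₁.actV g v) = φ₂.actV (τ g) (iso.mapV v)
  equivE : ∀ (g : G) e, iso.mapE (φ₁.actE g e) = φ₂.actE (τ g) (iso.mapE e)

/-- The set of simple closed walks on a graph `Γ`: pairs `(v₀, ℓ)` of an initial
vertex and an edge list forming a closed walk whose vertices `v₀, …, v_{n-1}` are
pairwise distinct. -/
def SimpleClosedWalks (Γ : FinDirGraph) : Set (Γ.V × List (Γ.E × Bool)) :=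
  {p | Γ.WalkFrom p.1 p.2 p.1 ∧ ((Γ.vertList p.1 p.2).dropLast).Nodup}

/-! An equivalence `θ̃` over `θ` maps each edge of the cover either preserving or reversing its
direction, and by equivariance this choice is constant on the fibre over an edge of the base.
Orienting `θ` accordingly turns walks on `B₁` into walks on `B₂`, simple closed ones into simple
closed ones, bijectively; and `θ̃` carries the lifts of `γ` starting at `w₀` to the lifts of
`θ(γ)` starting at `θ̃(w₀)`, twisting their end points by `τ`. Hence `θ` itself induces a
bijection `Θ` with `τ(NV_{φ₁}(γ)) = NV_{φ₂}(Θ(γ))`. -/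

open Function

def signedMap {α β : Type*} (f : α → β) (c : α → Prop) [DecidablePred c] (p : α × Bool) :
    β × Bool :=
  (f p.1, if c p.1 then p.2 else !p.2)

lemma signedMap_bijective {α β : Type*} {f : α → β} (hf : Bijective f) (c : α → Prop)
    [DecidablePred c] : Bijective (signedMap f c) := by
  refine ⟨?_, ?_⟩
  · rintro ⟨a, s⟩ ⟨b, t⟩ hab
    simp only [signedMap, Prod.mk.injEq] at hab
    obtain rfl := hf.1 hab.1
    have := hab.2
    split_ifs at this <;> simp_all
  · rintro ⟨b, t⟩
    obtain ⟨a, rfl⟩ := hf.2 b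
    refine ⟨(a, if c a then t else !t), ?_⟩
    by_cases h : c a <;> simp [signedMap, h]

namespace FinDirGraph

variable {Γ₁ Γ₂ : FinDirGraph}

def src (Γ : FinDirGraph) (p : Γ.E × Bool) : Γ.V := Γ.dsrc p.1 p.2

def tgt (Γ : FinDirGraph) (p : Γ.E × Bool) : Γ.V := Γ.ddst p.1 p.2

def PreservesEnds (fV : Γ₁.V → Γ₂.V) (fD : Γ₁.E × Bool → Γ₂.E × Bool) : Prop :=
  ∀ p, Γ₂.src (fD p) = fV (Γ₁.src p) ∧ Γ₂.tgt (fD p) = fV (Γ₁.tgt p)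

variable {fV : Γ₁.V → Γ₂.V} {fD : Γ₁.E × Bool → Γ₂.E × Bool}

lemma PreservesEnds.walkFrom_map_iff (hf : PreservesEnds fV fD) (hV : Injective fV) :
    ∀ (ℓ : List (Γ₁.E × Bool)) (v w : Γ₁.V),
      Γ₂.WalkFrom (fV v) (ℓ.map fD) (fV w) ↔ Γ₁.WalkFrom v ℓ w
  | [], v, w => hV.eq_iff
  | p :: ℓ, v, w => by
    have hsrc : Γ₂.dsrc (fD p).1 (fD p).2 = fV (Γ₁.dsrc p.1 p.2) := (hf p).1
    have htgt : Γ₂.ddst (fD p).1 (fD p).2 = fV (Γ₁.ddst p.1 p.2) := (hf p).2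
    simp only [List.map_cons, WalkFrom, hsrc, htgt, hV.eq_iff, hf.walkFrom_map_iff hV ℓ]

lemma PreservesEnds.vertList_map (hf : PreservesEnds fV fD) :
    ∀ (ℓ : List (Γ₁.E × Bool)) (v : Γ₁.V),
      Γ₂.vertList (fV v) (ℓ.map fD) = (Γ₁.vertList v ℓ).map fV
  | [], v => rfl
  | p :: ℓ, v => by
    have htgt : Γ₂.ddst (fD p).1 (fD p).2 = fV (Γ₁.ddst p.1 p.2) := (hf p).2
    simp only [List.map_cons, vertList, htgt, hf.vertList_map ℓ]

lemma PreservesEnds.map_mem_simpleClosedWalks_iff (hf : PreservesEnds fV fD) (hV : Injective fV)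
    (v : Γ₁.V) (ℓ : List (Γ₁.E × Bool)) :
    (fV v, ℓ.map fD) ∈ SimpleClosedWalks Γ₂ ↔ (v, ℓ) ∈ SimpleClosedWalks Γ₁ := by
  simp only [SimpleClosedWalks, Set.mem_ofPred_eq, hf.walkFrom_map_iff hV, hf.vertList_map,
    ← List.map_dropLast, List.nodup_map_iff hV]

def simpleClosedWalksEquiv (eV : Γ₁.V ≃ Γ₂.V) (eD : Γ₁.E × Bool ≃ Γ₂.E × Bool)
    (h : PreservesEnds eV eD) : SimpleClosedWalks Γ₁ ≃ SimpleClosedWalks Γ₂ :=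
  (eV.prodCongr (Equiv.listEquivOfEquiv eD)).subtypeEquiv fun p =>
    (h.map_mem_simpleClosedWalks_iff eV.injective p.1 p.2).symm

end FinDirGraph

namespace GraphMap

variable {Γ₁ Γ₂ : FinDirGraph} (θ : GraphMap Γ₁ Γ₂)

def Preserves (e : Γ₁.E) : Prop :=
  Γ₂.init (θ.mapE e) = θ.mapV (Γ₁.init e) ∧ Γ₂.term (θ.mapE e) = θ.mapV (Γ₁.term e)

lemma preserves_or_reverses (e : Γ₁.E) :
    θ.Preserves e ∨
      (Γ₂.init (θ.mapE e) = θ.mapV (Γ₁.term e) ∧ Γ₂.term (θ.mapE e) = θ.mapV (Γ₁.init e)) :=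
  Set.pair_eq_pair_iff.mp ((θ.endpoints e).trans (Set.image_pair _ _ _))

open Classical in
noncomputable def dirMap : Γ₁.E × Bool → Γ₂.E × Bool :=
  signedMap θ.mapE θ.Preserves

lemma preservesEnds_dirMap : FinDirGraph.PreservesEnds θ.mapV θ.dirMap := by
  rintro ⟨e, s⟩
  by_cases h : θ.Preserves e
  · cases s <;> simp [dirMap, signedMap, FinDirGraph.src, FinDirGraph.tgt, FinDirGraph.dsrc,
      FinDirGraph.ddst, h, h.1, h.2]
  · have h' := (θ.preserves_or_reverses e).resolve_left h
    cases s <;> simp [dirMap, signedMap, FinDirGraph.src, FinDirGraph.tgt, FinDirGraph.dsrc,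
      FinDirGraph.ddst, h, h'.1, h'.2]

end GraphMap

lemma GraphIso.dirMap_bijective {Γ₁ Γ₂ : FinDirGraph} (θ : GraphIso Γ₁ Γ₂) :
    Bijective θ.dirMap := by
  classical
  exact signedMap_bijective θ.bijE _

namespace GCover

variable {G : Type} [Group G] {T B : FinDirGraph} (φ : GCover G T B)

def dirProj (p : T.E × Bool) : B.E × Bool := (φ.mapE p.1, p.2)

lemma mem_NVset_iff {ℓ : List (B.E × Bool)} {w₀ : T.V} {g : G} :
    g ∈ φ.NVset ℓ w₀ ↔ ∃ ℓ' : List (T.E × Bool),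
      ℓ'.map φ.dirProj = ℓ ∧ T.WalkFrom w₀ ℓ' (φ.actV g w₀) :=
  Iff.rfl

lemma preservesEnds_dirProj : FinDirGraph.PreservesEnds φ.mapV φ.dirProj := by
  rintro ⟨e, s⟩
  cases s <;> simp [dirProj, FinDirGraph.src, FinDirGraph.tgt, FinDirGraph.dsrc,
    FinDirGraph.ddst, φ.map_init, φ.map_term]

lemma actV_injective (g : G) : Injective (φ.actV g) :=
  LeftInverse.injective (g := φ.actV g⁻¹) fun v => by rw [← φ.actV_mul, inv_mul_cancel, φ.actV_one]

end GCover

namespace GCoverEquiv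

variable {G : Type} [Group G] {T₁ B₁ T₂ B₂ : FinDirGraph} {φ₁ : GCover G T₁ B₁}
  {φ₂ : GCover G T₂ B₂} {θ : GraphIso B₁ B₂} {τ : G ≃* G} (E : GCoverEquiv φ₁ φ₂ θ τ)

lemma preserves_iff_of_mapE_eq {e e' : T₁.E} (h : φ₁.mapE e = φ₁.mapE e') :
    E.iso.Preserves e ↔ E.iso.Preserves e' := by
  obtain ⟨g, rfl⟩ := φ₁.transE e e' h
  simp only [GraphMap.Preserves, E.equivE, φ₁.act_init, φ₁.act_term, φ₂.act_init, φ₂.act_term,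
    E.equivV, (φ₂.actV_injective (τ g)).eq_iff]

open Classical in
/-- Orients each edge of `B₁` the way `θ̃` orients its lifts (all lifts agree, by equivariance). -/
noncomputable def baseDirMap : B₁.E × Bool → B₂.E × Bool :=
  signedMap θ.mapE fun f => E.iso.Preserves (surjInv φ₁.surjE f)

lemma baseDirMap_bijective : Bijective E.baseDirMap := by
  classical
  exact signedMap_bijective θ.bijE _

lemma dirProj_dirMap (p : T₁.E × Bool) :
    φ₂.dirProj (E.iso.dirMap p) = E.baseDirMap (φ₁.dirProj p) := by
  have h := E.preserves_iff_of_mapE_eq (surjInv_eq φ₁.surjE (φ₁.mapE p.1)).symm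
  simp only [GCover.dirProj, GraphMap.dirMap, baseDirMap, signedMap, E.commE]
  congr 2
  exact propext h

lemma preservesEnds_baseDirMap : FinDirGraph.PreservesEnds θ.mapV E.baseDirMap := by
  intro f
  obtain ⟨p, rfl⟩ : ∃ p, φ₁.dirProj p = f := ⟨(surjInv φ₁.surjE f.1, f.2), by
    simp [GCover.dirProj, surjInv_eq]⟩
  rw [← E.dirProj_dirMap, (φ₂.preservesEnds_dirProj _).1, (φ₂.preservesEnds_dirProj _).2,
    (E.iso.preservesEnds_dirMap p).1, (E.iso.preservesEnds_dirMap p).2, E.commV, E.commV,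
    ← (φ₁.preservesEnds_dirProj p).1, ← (φ₁.preservesEnds_dirProj p).2]
  exact ⟨rfl, rfl⟩

lemma NVset_map (ℓ : List (B₁.E × Bool)) (w₀ : T₁.V) :
    φ₂.NVset (ℓ.map E.baseDirMap) (E.iso.mapV w₀) = τ '' φ₁.NVset ℓ w₀ := by
  have hwalk := E.iso.preservesEnds_dirMap.walkFrom_map_iff E.iso.bijV.1
  have hproj (ℓ' : List (T₁.E × Bool)) :
      (ℓ'.map E.iso.dirMap).map φ₂.dirProj = (ℓ'.map φ₁.dirProj).map E.baseDirMap := by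
    simp only [List.map_map, comp_def, E.dirProj_dirMap]
  ext h
  simp only [GCover.mem_NVset_iff, Set.mem_image]
  constructor
  · rintro ⟨m', hm', hlift⟩
    obtain ⟨ℓ', rfl⟩ := List.map_surjective_iff.mpr E.iso.dirMap_bijective.2 m'
    refine ⟨τ.symm h, ⟨ℓ', ?_, ?_⟩, τ.apply_symm_apply h⟩
    · exact List.map_injective_iff.mpr E.baseDirMap_bijective.1 ((hproj ℓ').symm.trans hm')
    · rwa [← hwalk, E.equivV, τ.apply_symm_apply]
  · rintro ⟨g, ⟨ℓ', rfl, hlift⟩, rfl⟩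
    refine ⟨ℓ'.map E.iso.dirMap, hproj ℓ', ?_⟩
    rwa [← E.equivV, hwalk]

lemma NVclass_map (v : B₁.V) (ℓ : List (B₁.E × Bool)) :
    (fun S : Set G => (τ : G → G) '' S) '' φ₁.NVclass v ℓ =
      φ₂.NVclass (θ.mapV v) (ℓ.map E.baseDirMap) := by
  ext S
  simp only [Set.mem_image, GCover.NVclass, Set.mem_ofPred_eq]
  constructor
  · rintro ⟨_, ⟨w₀, rfl, g, rfl⟩, rfl⟩
    refine ⟨E.iso.mapV w₀, E.commV w₀, τ g, ?_⟩
    simp only [E.NVset_map, Set.image_image, map_mul, map_inv]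
  · rintro ⟨w₀', hw₀', g, rfl⟩
    obtain ⟨w₀, rfl⟩ := E.iso.bijV.2 w₀'
    have hv : φ₁.mapV w₀ = v := θ.bijV.1 (by rw [← E.commV, hw₀'])
    refine ⟨_, ⟨w₀, hv, τ.symm g, rfl⟩, ?_⟩
    simp only [E.NVset_map, Set.image_image, map_mul, map_inv, MulEquiv.apply_symm_apply]

end GCoverEquiv

theorem no_equiv_of_no_net_voltage_bijection_general {G : Type} [Group G]
    {T₁ B₁ T₂ B₂ : FinDirGraph}
    (φ₁ : GCover G T₁ B₁) (φ₂ : GCover G T₂ B₂) (τ : G ≃* G)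
    (h : ¬ ∃ Θ : ↥(SimpleClosedWalks B₁) ≃ ↥(SimpleClosedWalks B₂),
        ∀ w : ↥(SimpleClosedWalks B₁),
          (fun S : Set G => (τ : G → G) '' S) '' φ₁.NVclass w.1.1 w.1.2 =
            φ₂.NVclass (Θ w).1.1 (Θ w).1.2) :
    ¬ ∃ θ : GraphIso B₁ B₂, Nonempty (GCoverEquiv φ₁ φ₂ θ τ) := by
  rintro ⟨θ, ⟨E⟩⟩
  exact h ⟨FinDirGraph.simpleClosedWalksEquiv (Equiv.ofBijective θ.mapV θ.bijV)
    (Equiv.ofBijective _ E.baseDirMap_bijective) E.preservesEnds_baseDirMap,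
    fun w => E.NVclass_map w.1.1 w.1.2⟩

/-- **Corollary 2.10.** If there is no bijection `Θ` between the sets of simple
closed walks of `B₁` and `B₂` with `τ(NV_{φ₁}(γ)) = NV_{φ₂}(Θ(γ))` for all simple
closed walks `γ` on `B₁`, then there is no graph isomorphism `θ : B₁ → B₂` making
the covers `(θ, τ)`-equivalent. -/
theorem no_equiv_of_no_net_voltage_bijection {G : Type} [Group G] [Finite G]
    {T₁ B₁ T₂ B₂ : FinDirGraph}
    (φ₁ : GCover G T₁ B₁) (φ₂ : GCover G T₂ B₂) (τ : G ≃* G)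
    (h : ¬ ∃ Θ : ↥(SimpleClosedWalks B₁) ≃ ↥(SimpleClosedWalks B₂),
        ∀ w : ↥(SimpleClosedWalks B₁),
          (fun S : Set G => (τ : G → G) '' S) '' φ₁.NVclass w.1.1 w.1.2 =
            φ₂.NVclass (Θ w).1.1 (Θ w).1.2) :
    ¬ ∃ θ : GraphIso B₁ B₂, Nonempty (GCoverEquiv φ₁ φ₂ θ τ) :=
  no_equiv_of_no_net_voltage_bijection_general φ₁ φ₂ τ h
end

section
/- Let n ≥ 1, let μ₁, …, μₙ be positive integers with gcd(μ₁, …, μₙ) = 1, and let a ∈ ℂ with a ≠ 0. Then the set V := {(c₁, …, cₙ) ∈ ℂⁿ : c_j ≠ 0 for all j, c_j ≠ c_{j'} whenever j ≠ j', and c₁^{μ₁} ⋯ cₙ^{μₙ} = a}, equipped with the subspace topology of ℂⁿ, is nonempty and connected. -/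
/-!
Pass to logarithmic coordinates. Since `gcd μ = 1`, Bézout lets one absorb the `2πiℤ`-ambiguity of
`log`, so `z ↦ exp ∘ z` maps the hyperplane `H = {∑ μ_j z_j = log a}`, with the countably many
affine subspaces `z_i - z_j ∈ 2πiℤ` removed, onto the set in question. Along a complex line in `H`
through a fixed point of this complement, each removed subspace is met at most once (a parallel one
would contain that point), so the line stays in the complement off a countable set of parameters.
As `ℂ` minus a countable set is path connected, the complement is path connected, and so is its
image.
-/

open Complex Finset AffineMap

lemma exists_int_sum_mul_eq_one {ι : Type*} (s : Finset ι) (μ : ι → ℕ) (h : s.gcd μ = 1) :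
    ∃ k : ι → ℤ, ∑ j ∈ s, k j * μ j = 1 := by
  obtain ⟨g, hg⟩ := s.gcd_eq_sum_mul fun j => (μ j : ℤ)
  set d := s.gcd fun j => (μ j : ℤ)
  have hd : d.natAbs = 1 :=
    Nat.dvd_one.1 <| h ▸ Finset.dvd_gcd fun j hj => Int.natAbs_dvd_natAbs.2 (Finset.gcd_dvd hj)
  refine ⟨fun j => d * g j, ?_⟩
  calc ∑ j ∈ s, d * g j * μ j = d * ∑ j ∈ s, μ j * g j := by
        rw [mul_sum]; exact sum_congr rfl fun j _ => by ring
    _ = d * d := by rw [← hg]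
    _ = 1 := by rw [← Int.natAbs_mul_self', hd]; rfl

theorem isPathConnected_of_countable_setOf_lineMap_notMem {E : Type*} [AddCommGroup E]
    [Module ℂ E] [TopologicalSpace E] [IsTopologicalAddGroup E] [ContinuousSMul ℂ E]
    {G : Set E} {x : E} (hx : x ∈ G)
    (h : ∀ y ∈ G, {w : ℂ | lineMap x y w ∉ G}.Countable) : IsPathConnected G := by
  refine ⟨x, hx, fun y hy => ?_⟩
  have hpath := (h y hy).isPathConnected_compl_of_one_lt_rank
    (by simp [Complex.rank_real_complex])
  have hjoin := (hpath.joinedIn 0 (by simpa using hx) 1 (by simpa using hy)).map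
    (lineMap_continuous (R := ℂ) (p := x) (q := y))
  simp only [lineMap_apply_zero, lineMap_apply_one] at hjoin
  exact hjoin.mono (by rintro _ ⟨w, hw, rfl⟩; simpa using hw)

lemma countable_setOf_exp_lineMap_eq {a b c d : ℂ} (h : exp a ≠ exp c) :
    {w : ℂ | exp (lineMap a b w) = exp (lineMap c d w)}.Countable := by
  have hsub : {w : ℂ | exp (lineMap a b w) = exp (lineMap c d w)} ⊆
      ⋃ m : ℤ, {w | lineMap a b w = lineMap c d w + m * (2 * Real.pi * I)} :=
    fun w hw => Set.mem_iUnion.2 (exp_eq_exp_iff_exists_int.1 hw)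
  refine (Set.countable_iUnion fun m => Set.Subsingleton.countable ?_).mono hsub
  -- Two solutions for the same `m` force equal slopes, and then `w = 0` would be a solution too.
  intro w₁ h₁ w₂ h₂
  simp only [Set.mem_ofPred_eq, lineMap_apply_ring'] at h₁ h₂
  by_contra hne
  have hslope : (b - a) - (d - c) = 0 :=
    (mul_eq_zero.1 (by linear_combination h₁ - h₂ :
      (w₁ - w₂) * ((b - a) - (d - c)) = 0)).resolve_left (sub_ne_zero.2 hne)
  exact h (exp_eq_exp_iff_exists_int.2 ⟨m, by linear_combination h₁ - w₁ * hslope⟩)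

lemma injective_exp_add_ofReal (s : ℂ) : Function.Injective fun x : ℝ => exp (s + x) := by
  intro x y hxy
  obtain ⟨m, hm⟩ := exp_eq_exp_iff_exists_int.1 hxy
  simpa using congrArg re hm

lemma prod_exp_pow {ι : Type*} (s : Finset ι) (μ : ι → ℕ) (z : ι → ℂ) :
    ∏ j ∈ s, exp (z j) ^ μ j = exp (∑ j ∈ s, μ j * z j) := by
  simp only [exp_sum, exp_nat_mul]

variable {ι : Type*} [Fintype ι]

def logFiber (μ : ι → ℕ) (L : ℂ) : Set (ι → ℂ) :=
  {z | ∑ j, μ j * z j = L ∧ Pairwise fun i j => exp (z i) ≠ exp (z j)}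

lemma logFiber_nonempty {μ : ι → ℕ} (hμ : ∑ j, μ j ≠ 0) (L : ℂ) : (logFiber μ L).Nonempty := by
  set t : ι → ℝ := fun j => (Fintype.equivFin ι j : ℕ)
  have ht : Function.Injective t := (Nat.cast_injective.comp Fin.val_injective).comp
    (Fintype.equivFin ι).injective
  have hN : (∑ j, μ j : ℂ) ≠ 0 := by exact_mod_cast hμ
  set s := (L - ∑ j, μ j * (t j : ℂ)) / ∑ j, (μ j : ℂ)
  refine ⟨fun j => s + t j, ?_, fun i j hij h => hij (ht (injective_exp_add_ofReal s h))⟩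
  simp only [mul_add, sum_add_distrib, ← sum_mul, s]
  rw [mul_div_cancel₀ _ hN, sub_add_cancel]

lemma lineMap_mem_logFiber {μ : ι → ℕ} {L : ℂ} {x y : ι → ℂ} (hx : x ∈ logFiber μ L)
    (hy : y ∈ logFiber μ L) {w : ℂ}
    (hw : Pairwise fun i j => exp (lineMap x y w i) ≠ exp (lineMap x y w j)) :
    lineMap x y w ∈ logFiber μ L := by
  refine ⟨?_, hw⟩
  calc ∑ j, μ j * lineMap x y w j
      = w * (∑ j, μ j * y j - ∑ j, μ j * x j) + ∑ j, μ j * x j := by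
        simp only [pi_lineMap_apply, lineMap_apply_ring', mul_sum, ← sum_sub_distrib,
          ← sum_add_distrib]
        exact sum_congr rfl fun j _ => by ring
    _ = L := by rw [hx.1, hy.1]; ring

lemma countable_setOf_lineMap_notMem_logFiber {μ : ι → ℕ} {L : ℂ} {x y : ι → ℂ}
    (hx : x ∈ logFiber μ L) (hy : y ∈ logFiber μ L) :
    {w : ℂ | lineMap x y w ∉ logFiber μ L}.Countable := by
  have hsub : {w : ℂ | lineMap x y w ∉ logFiber μ L} ⊆ ⋃ p : {p : ι × ι // p.1 ≠ p.2},
      {w | exp (lineMap (x p.1.1) (y p.1.1) w) = exp (lineMap (x p.1.2) (y p.1.2) w)} := by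
    intro w hw
    by_contra h
    simp only [Set.mem_iUnion, not_exists] at h
    exact hw (lineMap_mem_logFiber hx hy fun i j hij => by
      simp only [pi_lineMap_apply]; exact h ⟨(i, j), hij⟩)
  exact (Set.countable_iUnion fun p => countable_setOf_exp_lineMap_eq (hx.2 p.2)).mono hsub

lemma isPathConnected_logFiber {μ : ι → ℕ} (hμ : ∑ j, μ j ≠ 0) (L : ℂ) :
    IsPathConnected (logFiber μ L) :=
  let ⟨_, hx⟩ := logFiber_nonempty hμ L
  isPathConnected_of_countable_setOf_lineMap_notMem hx fun _ hy =>
    countable_setOf_lineMap_notMem_logFiber hx hy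

lemma image_exp_logFiber {μ : ι → ℕ} (hgcd : univ.gcd μ = 1) {a : ℂ} (ha : a ≠ 0) :
    (fun z j => exp (z j)) '' logFiber μ (log a) =
      {c : ι → ℂ | (∀ j, c j ≠ 0) ∧ (∀ j j', j ≠ j' → c j ≠ c j') ∧ ∏ j, c j ^ μ j = a} := by
  ext c
  constructor
  · rintro ⟨z, ⟨hsum, hdist⟩, rfl⟩
    exact ⟨fun j => exp_ne_zero _, hdist, by rw [prod_exp_pow, hsum, exp_log ha]⟩
  rintro ⟨hc0, hdist, hprod⟩
  obtain ⟨k, hk⟩ := exists_int_sum_mul_eq_one univ μ hgcd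
  have hkC : ∑ j, (k j : ℂ) * μ j = 1 := by exact_mod_cast hk
  obtain ⟨m, hm⟩ : ∃ m : ℤ, ∑ j, μ j * log (c j) = log a + m * (2 * Real.pi * I) := by
    refine exp_eq_exp_iff_exists_int.1 ?_
    rw [← prod_exp_pow, exp_log ha, ← hprod]
    exact prod_congr rfl fun j _ => by rw [exp_log (hc0 j)]
  set z : ι → ℂ := fun j => log (c j) - (m * k j : ℤ) * (2 * Real.pi * I)
  have hexp : ∀ j, exp (z j) = c j := fun j => by
    rw [exp_sub, exp_int_mul_two_pi_mul_I, div_one, exp_log (hc0 j)]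
  refine ⟨z, ⟨?_, fun i j hij => by simp only [hexp]; exact hdist i j hij⟩, funext hexp⟩
  calc ∑ j, μ j * z j
      = ∑ j, μ j * log (c j) - m * (2 * Real.pi * I) * ∑ j, (k j : ℂ) * μ j := by
        simp only [z, mul_sum, ← sum_sub_distrib]
        exact sum_congr rfl fun j _ => by push_cast; ring
    _ = log a := by rw [hm, hkC]; ring

theorem connected_fiber_of_monomial_distinct_general {n : ℕ} (μ : Fin n → ℕ)
    (hgcd : Finset.univ.gcd μ = 1) (a : ℂ) (ha : a ≠ 0) :
    IsConnected {c : Fin n → ℂ |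
      (∀ j, c j ≠ 0) ∧ (∀ j j', j ≠ j' → c j ≠ c j') ∧ ∏ j, c j ^ μ j = a} := by
  have hμ : ∑ j, μ j ≠ 0 := fun h => by
    simpa [hgcd] using Finset.gcd_eq_zero_iff.2 (sum_eq_zero_iff.1 h)
  rw [← image_exp_logFiber hgcd ha]
  exact ((isPathConnected_logFiber hμ _).image
    (continuous_pi fun j => continuous_exp.comp (continuous_apply j))).isConnected

/-- The set `V = {(c₁, …, cₙ) ∈ (ℂ^×)ⁿ : the c_j are pairwise distinct and
c₁^{μ₁} ⋯ cₙ^{μₙ} = a}` (for `a ≠ 0`, `μ_j > 0` and `gcd(μ₁, …, μₙ) = 1`, `n ≥ 1`)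
is nonempty and connected. -/
theorem connected_fiber_of_monomial_distinct {n : ℕ} (hn : 1 ≤ n) (μ : Fin n → ℕ)
    (hμ : ∀ j, 0 < μ j) (hgcd : Finset.univ.gcd μ = 1) (a : ℂ) (ha : a ≠ 0) :
    IsConnected {c : Fin n → ℂ |
      (∀ j, c j ≠ 0) ∧ (∀ j j', j ≠ j' → c j ≠ c j') ∧ ∏ j, c j ^ μ j = a} :=
  connected_fiber_of_monomial_distinct_general μ hgcd a ha
end
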